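/- arXiv:2603.15680 — 5 statements merged into one kernel-verified Lean document; each statement's English description precedes it below -/
import Mathlib

section
/- For every real x, the second derivative of S at x equals -(2P-1) · (∏_{ℓ=1}^{P-1} (2ℓ-1)/(2ℓ)) · sin(x)^{2P-1}. -/
open Real Finset

/-- The fixed-point function `S` of the paper:
`S(x) = x + ∑_{k=1}^{P} (∏_{ℓ=1}^{k-1} (2ℓ-1)/(2ℓ)) · sin(x)^{2k-1}/(2k-1)`. -/
noncomputable def S (P : ℕ) (x : ℝ) : ℝ :=
  x + ∑ k ∈ Finset.Icc 1 P,
    (∏ l ∈ Finset.Icc 1 (k - 1), ((2 * (l : ℝ) - 1) / (2 * l))) *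
      (Real.sin x) ^ (2 * k - 1) / (2 * (k : ℝ) - 1)

noncomputable def cp (k : ℕ) : ℝ := ∏ l ∈ Finset.Icc 1 (k - 1), ((2 * (l : ℝ) - 1) / (2 * l))

noncomputable def D (P : ℕ) (x : ℝ) : ℝ :=
  1 + (∑ k ∈ Finset.Icc 1 P, cp k * Real.sin x ^ (2 * k - 2)) * Real.cos x

noncomputable def E (P : ℕ) (x : ℝ) : ℝ :=
  (∑ k ∈ Finset.Icc 1 P, cp k * (((2 * k - 2 : ℕ) : ℝ) * Real.sin x ^ (2 * k - 3) * Real.cos x)) * Real.cos x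
    + (∑ k ∈ Finset.Icc 1 P, cp k * Real.sin x ^ (2 * k - 2)) * (-Real.sin x)

lemma cp_succ (P : ℕ) (hP : 1 ≤ P) :
    cp (P + 1) = cp P * ((2 * (P : ℝ) - 1) / (2 * P)) := by
  obtain ⟨m, rfl⟩ : ∃ m, P = m + 1 := ⟨P - 1, by omega⟩
  unfold cp
  simp only [Nat.add_sub_cancel]
  rw [Finset.prod_Icc_succ_top (by omega)]

lemma hasDerivAt_S (P : ℕ) (x : ℝ) : HasDerivAt (S P) (D P x) x := by
  have h2 : ∀ k ∈ Finset.Icc 1 P,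
      HasDerivAt (fun y => cp k * Real.sin y ^ (2 * k - 1) / (2 * (k : ℝ) - 1))
        (cp k * Real.sin x ^ (2 * k - 2) * Real.cos x) x := by
    intro k hk
    simp only [Finset.mem_Icc] at hk
    have h1 : (1:ℕ) ≤ k := hk.1
    have h := (((Real.hasDerivAt_sin x).pow (2 * k - 1)).const_mul (cp k)).div_const
      (2 * (k : ℝ) - 1)
    refine h.congr_deriv (Eq.symm ?_)
    have hne : (2 * (k : ℝ) - 1) ≠ 0 := by
      have : (1:ℝ) ≤ (k:ℝ) := by exact_mod_cast h1
      nlinarith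
    have hcast : ((2 * k - 1 : ℕ) : ℝ) = 2 * (k : ℝ) - 1 := by
      push_cast [Nat.cast_sub (by omega : 1 ≤ 2 * k)]; ring
    have hexp : 2 * k - 1 - 1 = 2 * k - 2 := by omega
    rw [hexp, hcast]
    field_simp
  have hsum := HasDerivAt.fun_sum h2
  have := (hasDerivAt_id x).add hsum
  unfold S D
  refine this.congr_deriv (Eq.symm ?_)
  rw [Finset.sum_mul]

lemma hasDerivAt_D (P : ℕ) (x : ℝ) : HasDerivAt (D P) (E P x) x := by
  have hf : HasDerivAt (fun y => ∑ k ∈ Finset.Icc 1 P, cp k * Real.sin y ^ (2 * k - 2))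
      (∑ k ∈ Finset.Icc 1 P, cp k * (((2 * k - 2 : ℕ) : ℝ) * Real.sin x ^ (2 * k - 3) * Real.cos x)) x := by
    apply HasDerivAt.fun_sum
    intro k hk
    have h := ((Real.hasDerivAt_sin x).pow (2 * k - 2)).const_mul (cp k)
    refine h.congr_deriv (Eq.symm ?_)
    rw [show 2 * k - 3 = 2 * k - 2 - 1 by omega]
  have hc : HasDerivAt Real.cos (-Real.sin x) x := Real.hasDerivAt_cos x
  have := (hf.mul hc).const_add 1
  unfold D E
  exact this

lemma E_eq (P : ℕ) (hP : 1 ≤ P) (x : ℝ) :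
    E P x = -(2 * (P : ℝ) - 1) * cp P * Real.sin x ^ (2 * P - 1) := by
  induction P, hP using Nat.le_induction with
  | base =>
    unfold E cp
    norm_num
  | succ n hn ih =>
    unfold E at ih ⊢
    rw [Finset.sum_Icc_succ_top (by omega), Finset.sum_Icc_succ_top (by omega)]
    have hcos : Real.cos x ^ 2 = 1 - Real.sin x ^ 2 := by
      have := Real.sin_sq_add_cos_sq x; linarith
    have h1 : 2 * (n + 1) - 2 = 2 * n := by omega
    have h2 : 2 * (n + 1) - 3 = 2 * n - 1 := by omega
    have h3 : 2 * (n + 1) - 1 = 2 * n + 1 := by omega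
    have h4 : Real.sin x ^ (2 * n - 1) * Real.sin x ^ 2 = Real.sin x ^ (2 * n + 1) := by
      rw [← pow_add]; congr 1; omega
    have h5 : Real.sin x ^ (2 * n) * Real.sin x = Real.sin x ^ (2 * n + 1) := by
      rw [← pow_succ]
    have h6 : Real.sin x ^ (2 * n - 1) * Real.sin x ^ 2 = Real.sin x ^ (2 * n - 1) * Real.sin x ^ 2 := rfl
    have hcp : cp (n + 1) * (2 * (n : ℝ)) = (2 * (n : ℝ) - 1) * cp n := by
      rw [cp_succ n hn]
      have : (2 * (n : ℝ)) ≠ 0 := by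
        have : (1:ℝ) ≤ (n:ℝ) := by exact_mod_cast hn
        nlinarith
      field_simp
    rw [h1, h2, h3]
    -- now algebra
    push_cast
    linear_combination ih + (Real.sin x ^ (2 * n - 1) * Real.cos x ^ 2) * hcp +
      ((2 * (n:ℝ) - 1) * cp n * Real.sin x ^ (2 * n - 1)) * hcos -
      ((2 * (n:ℝ) - 1) * cp n) * h4 + (Real.sin x ^ (2 * n + 1)) * hcp

theorem stmt_3 (P : ℕ) (hP : 0 < P) (x : ℝ) :
    iteratedDeriv 2 (S P) x =
      -(2 * (P : ℝ) - 1) *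
        (∏ l ∈ Finset.Icc 1 (P - 1), ((2 * (l : ℝ) - 1) / (2 * l))) *
          (Real.sin x) ^ (2 * P - 1) := by
  have hd : deriv (S P) = D P := funext fun y => (hasDerivAt_S P y).deriv
  rw [show (2:ℕ) = 1 + 1 from rfl, iteratedDeriv_succ, iteratedDeriv_one, hd,
    (hasDerivAt_D P x).deriv, E_eq P hP x]
  rfl
end

section
/- For every natural number k with 1 ≤ k ≤ 2P, the k-th derivative of S at π vanishes: S^{(k)}(π) = 0. -/
open Real Finset

/-- Auxiliary coefficients `aa j = ∏_{ℓ=1}^{j} (2ℓ-1)/(2ℓ)`. -/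
noncomputable def aa (j : ℕ) : ℝ := ∏ l ∈ Finset.Icc 1 j, ((2 * (l : ℝ) - 1) / (2 * l))

lemma aa_succ (j : ℕ) : aa (j+1) = aa j * ((2 * ((j:ℝ)+1) - 1) / (2 * ((j:ℝ)+1))) := by
  unfold aa
  rw [Finset.prod_Icc_succ_top (by omega)]
  push_cast; ring

/-- Telescoping auxiliary sequence. -/
noncomputable def ee (s : ℝ) : ℕ → ℝ
  | 0 => 0
  | (j+1) => (2*(j:ℝ)+1) * aa j * s^(2*j+1)

lemma telescope (P : ℕ) (hP : 0 < P) (s c : ℝ) (hcs : s^2 + c^2 = 1) :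
    ∑ k ∈ Finset.Icc 1 P,
      aa (k-1) * ((((2*k-2 : ℕ):ℝ) * s ^ (2*k-3) * c) * c + s ^ (2*k-2) * (-s))
      = -(2*(P:ℝ)-1) * aa (P-1) * s ^ (2*P-1) := by
  have hterm : ∀ i : ℕ, aa ((1+i)-1) * ((((2*(1+i)-2 : ℕ):ℝ) * s ^ (2*(1+i)-3) * c) * c
      + s ^ (2*(1+i)-2) * (-s)) = ee s i - ee s (i+1) := by
    intro i
    match i with
    | 0 => simp [ee]
    | j+1 =>
      have h1 : (1 + (j+1)) - 1 = j+1 := by omega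
      have h2 : 2*(1+(j+1))-2 = 2*j+2 := by omega
      have h3 : 2*(1+(j+1))-3 = 2*j+1 := by omega
      rw [h1, h2, h3]
      have hr : aa (j+1) * (2*((j:ℝ)+1)) = aa j * (2*((j:ℝ)+1)-1) := by
        rw [aa_succ]
        have : 2*((j:ℝ)+1) ≠ 0 := by positivity
        field_simp
      show aa (j+1) * ((((2*j+2 : ℕ):ℝ) * s ^ (2*j+1) * c) * c + s ^ (2*j+2) * (-s))
          = (2*(j:ℝ)+1) * aa j * s^(2*j+1) - (2*((j+1:ℕ):ℝ)+1) * aa (j+1) * s^(2*(j+1)+1)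
      push_cast
      linear_combination (aa (j+1) * (2*(j:ℝ)+2) * s^(2*j+1)) * hcs + (s^(2*j+1)) * hr
  have hre : Finset.Icc 1 P = Finset.Ico 1 (P+1) := rfl
  rw [hre, Finset.sum_Ico_eq_sum_range]
  simp only [Nat.add_sub_cancel]
  rw [Finset.sum_congr rfl (fun i _ => hterm i), Finset.sum_range_sub' (ee s) P]
  have hP1 : P = (P-1)+1 := by omega
  rw [hP1]
  show (0:ℝ) - (2*((P-1:ℕ):ℝ)+1) * aa (P-1) * s^(2*(P-1)+1)
      = -(2*(((P-1)+1:ℕ):ℝ)-1) * aa ((P-1+1)-1) * s ^ (2*((P-1)+1)-1)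
  have h4 : 2*((P-1)+1)-1 = 2*(P-1)+1 := by omega
  have h5 : (P-1+1)-1 = P-1 := by omega
  rw [h4, h5]
  push_cast
  ring

/-- First derivative of `S`. -/
lemma hasDerivAt_S_s4 (P : ℕ) (x : ℝ) : HasDerivAt (S P)
    (1 + ∑ k ∈ Finset.Icc 1 P, aa (k-1) * Real.sin x ^ (2*k-2) * Real.cos x) x := by
  have h : ∀ k ∈ Finset.Icc 1 P, HasDerivAt
      (fun x => aa (k-1) * (Real.sin x) ^ (2 * k - 1) / (2 * (k : ℝ) - 1))
      (aa (k-1) * Real.sin x ^ (2*k-2) * Real.cos x) x := by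
    intro k hk
    have hk1 : 1 ≤ k := (Finset.mem_Icc.mp hk).1
    have h1 : HasDerivAt (fun x => aa (k-1) * (Real.sin x) ^ (2 * k - 1) / (2 * (k : ℝ) - 1))
        ((aa (k-1) * (((2*k-1 : ℕ):ℝ) * Real.sin x ^ (2*k-1-1) * Real.cos x)) / (2 * (k : ℝ) - 1)) x :=
      (((Real.hasDerivAt_sin x).pow (2*k-1)).const_mul (aa (k-1))).div_const _
    convert h1 using 1
    have hc : ((2*k-1 : ℕ):ℝ) = 2 * (k:ℝ) - 1 := by
      have : (1:ℕ) ≤ 2*k := by omega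
      push_cast [this]
      ring
    have hne : 2 * (k:ℝ) - 1 ≠ 0 := by
      have : (1:ℝ) ≤ (k:ℝ) := by exact_mod_cast hk1
      nlinarith
    rw [show 2*k-1-1 = 2*k-2 from rfl, hc]
    field_simp
  exact (hasDerivAt_id x).add (HasDerivAt.fun_sum h)

/-- Second derivative of `S`. -/
lemma hasDerivAt_g (P : ℕ) (hP : 0 < P) (x : ℝ) :
    HasDerivAt
      (fun x => 1 + ∑ k ∈ Finset.Icc 1 P, aa (k-1) * Real.sin x ^ (2*k-2) * Real.cos x)
      (-(2*(P:ℝ)-1) * aa (P-1) * Real.sin x ^ (2*P-1)) x := by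
  have h : ∀ k ∈ Finset.Icc 1 P, HasDerivAt
      (fun x => aa (k-1) * Real.sin x ^ (2*k-2) * Real.cos x)
      (aa (k-1) * ((((2*k-2 : ℕ):ℝ) * Real.sin x ^ (2*k-3) * Real.cos x) * Real.cos x
        + Real.sin x ^ (2*k-2) * (-Real.sin x))) x := by
    intro k _
    have h0 := ((((Real.hasDerivAt_sin x).fun_pow (2*k-2)).const_mul (aa (k-1))).fun_mul
      (Real.hasDerivAt_cos x))
    refine h0.congr_deriv ?_
    rw [show 2*k-3 = 2*k-2-1 from by omega]
    ring
  have hsum := (HasDerivAt.fun_sum h).const_add (1:ℝ)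
  rwa [telescope P hP (Real.sin x) (Real.cos x) (Real.sin_sq_add_cos_sq x)] at hsum

/-- Iterated derivatives of `C·sin^n` carry a factor `sin^(n-j)`. -/
lemma vanish (n : ℕ) (C : ℝ) : ∀ j, j ≤ n → ∃ f : ℝ → ℝ, ContDiff ℝ (↑(⊤:ℕ∞)) f ∧
    iteratedDeriv j (fun x => C * Real.sin x ^ n) = fun x => Real.sin x ^ (n - j) * f x := by
  intro j
  induction j with
  | zero =>
    intro _
    exact ⟨fun _ => C, contDiff_const, by simp [mul_comm]⟩
  | succ j ih =>
    intro hj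
    obtain ⟨f, hf, hid⟩ := ih (by omega)
    obtain ⟨hfd, hfd'⟩ := contDiff_infty_iff_deriv.mp hf
    refine ⟨fun x => ((n - j : ℕ) : ℝ) * Real.cos x * f x + Real.sin x * deriv f x,
      (((contDiff_const.mul Real.contDiff_cos).mul hf).add
        (Real.contDiff_sin.mul hfd')), ?_⟩
    rw [iteratedDeriv_succ, hid]
    funext x
    have h1 : HasDerivAt (fun x => Real.sin x ^ (n - j) * f x)
        ((((n-j:ℕ):ℝ) * Real.sin x ^ (n - j - 1) * Real.cos x) * f x
          + Real.sin x ^ (n - j) * deriv f x) x :=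
      (((Real.hasDerivAt_sin x).pow (n - j)).mul (hfd x).hasDerivAt)
    rw [h1.deriv]
    have he : n - j = (n - (j+1)) + 1 := by omega
    rw [he]
    rw [show n - (j+1) + 1 - 1 = n - (j+1) from rfl, pow_succ]
    ring

theorem stmt_4 (P : ℕ) (hP : 0 < P) (k : ℕ) (hk1 : 1 ≤ k) (hk2 : k ≤ 2 * P) :
    iteratedDeriv k (S P) Real.pi = 0 := by
  have hd1 : deriv (S P)
      = fun x => 1 + ∑ k ∈ Finset.Icc 1 P, aa (k-1) * Real.sin x ^ (2*k-2) * Real.cos x :=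
    funext fun x => (hasDerivAt_S_s4 P x).deriv
  rcases Nat.lt_or_ge k 2 with hk | hk
  · -- k = 1
    have hk1' : k = 1 := by omega
    subst hk1'
    rw [iteratedDeriv_one, hd1]
    have hsum : ∑ k ∈ Finset.Icc 1 P,
        aa (k-1) * Real.sin π ^ (2*k-2) * Real.cos π = -1 := by
      rw [Finset.sum_eq_single_of_mem 1 (Finset.mem_Icc.mpr ⟨le_refl 1, hP⟩)]
      · simp [aa, Real.sin_pi, Real.cos_pi]
      · intro b hb hb1
        have hb' : 1 ≤ b := (Finset.mem_Icc.mp hb).1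
        rw [Real.sin_pi, zero_pow (by omega : 2*b-2 ≠ 0)]
        ring
    show 1 + ∑ k ∈ Finset.Icc 1 P,
        aa (k-1) * Real.sin π ^ (2*k-2) * Real.cos π = 0
    rw [hsum]; ring
  · -- k ≥ 2
    obtain ⟨j, rfl⟩ : ∃ j, k = j + 1 + 1 := ⟨k - 2, by omega⟩
    have hd2 : deriv
        (fun x => 1 + ∑ k ∈ Finset.Icc 1 P, aa (k-1) * Real.sin x ^ (2*k-2) * Real.cos x)
        = fun x => (-(2*(P:ℝ)-1) * aa (P-1)) * Real.sin x ^ (2*P-1) := by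
      funext x
      rw [(hasDerivAt_g P hP x).deriv]
    rw [iteratedDeriv_succ', hd1, iteratedDeriv_succ', hd2]
    obtain ⟨f, _, hid⟩ := vanish (2*P-1) (-(2*(P:ℝ)-1) * aa (P-1)) j (by omega)
    rw [hid]
    have : Real.sin π ^ (2*P-1-j) = 0 := by
      rw [Real.sin_pi, zero_pow (by omega : 2*P-1-j ≠ 0)]
    show Real.sin π ^ (2*P-1-j) * f π = 0
    rw [this]; ring
end

section
/- The (2P+1)-th derivative of S at π equals the square of the product of the first P odd numbers: S^{(2P+1)}(π) = (∏_{ℓ=1}^{P} (2ℓ-1))². -/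
open Real Finset

private lemma itd_const_mul (c : ℝ) {f : ℝ → ℝ} (hf : ContDiff ℝ (⊤ : ℕ∞) f) (n : ℕ) (x : ℝ) :
    iteratedDeriv n (fun y => c * f y) x = c * iteratedDeriv n f x := by
  rw [← iteratedDerivWithin_univ, ← iteratedDerivWithin_univ]
  exact iteratedDerivWithin_const_mul (Set.mem_univ x) uniqueDiffOn_univ c
    ((hf.of_le (mod_cast le_top)).contDiffWithinAt)

private lemma itd_sub {f g : ℝ → ℝ} (hf : ContDiff ℝ (⊤ : ℕ∞) f) (hg : ContDiff ℝ (⊤ : ℕ∞) g) (n : ℕ) (x : ℝ) :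
    iteratedDeriv n (fun y => f y - g y) x = iteratedDeriv n f x - iteratedDeriv n g x := by
  rw [← iteratedDerivWithin_univ, ← iteratedDerivWithin_univ, ← iteratedDerivWithin_univ]
  exact iteratedDerivWithin_sub (Set.mem_univ x) uniqueDiffOn_univ
    ((hf.of_le (mod_cast le_top)).contDiffWithinAt) ((hg.of_le (mod_cast le_top)).contDiffWithinAt)

private lemma deriv_sin_pow (a : ℕ) :
    deriv (fun x => Real.sin x ^ (a+1)) = fun x => ((a:ℝ)+1) * (Real.sin x ^ a * Real.cos x) := by
  funext x
  rw [(show HasDerivAt (fun y => Real.sin y ^ (a+1)) _ x from (Real.differentiable_sin x).hasDerivAt.pow (a+1)).deriv, Real.deriv_sin]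
  push_cast
  ring

private lemma deriv_sin_pow_cos (a : ℕ) :
    deriv (fun x => Real.sin x ^ (a+1) * Real.cos x)
      = fun x => ((a:ℝ)+1) * Real.sin x ^ a - ((a:ℝ)+2) * Real.sin x ^ (a+2) := by
  funext x
  rw [deriv_fun_mul (by fun_prop) (by fun_prop), (show HasDerivAt (fun y => Real.sin y ^ (a+1)) _ x from (Real.differentiable_sin x).hasDerivAt.pow (a+1)).deriv,
    Real.deriv_sin, Real.deriv_cos]
  have h := Real.sin_sq_add_cos_sq x
  simp only [Nat.add_sub_cancel]
  push_cast
  linear_combination ((a:ℝ)+1) * Real.sin x ^ a * h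

private lemma AB : ∀ j a : ℕ, j ≤ a →
    (iteratedDeriv j (fun x => Real.sin x ^ a) Real.pi
      = if j = a then (-1:ℝ)^a * a.factorial else 0) ∧
    (iteratedDeriv j (fun x => Real.sin x ^ a * Real.cos x) Real.pi
      = if j = a then (-1:ℝ)^(a+1) * a.factorial else 0) := by
  intro j
  induction j with
  | zero =>
    intro a _
    match a with
    | 0 => simp [iteratedDeriv_zero]
    | b+1 => simp [iteratedDeriv_zero, Real.sin_pi, Nat.succ_ne_zero]
  | succ j ih =>
    intro a ha
    match a, ha with
    | b+1, ha =>
      have hjb : j ≤ b := Nat.lt_succ_iff.mp ha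
      constructor
      · rw [iteratedDeriv_succ', deriv_sin_pow b,
          itd_const_mul _ ((Real.contDiff_sin.pow b).mul Real.contDiff_cos) j Real.pi,
          (ih b hjb).2]
        by_cases h : j = b
        · subst h
          rw [if_pos rfl, if_pos rfl, Nat.factorial_succ]
          push_cast
          ring
        · rw [if_neg h, if_neg (by omega), mul_zero]
      · rw [iteratedDeriv_succ', deriv_sin_pow_cos b]
        have h1 : ContDiff ℝ (⊤ : ℕ∞) (fun x => Real.sin x ^ b) := Real.contDiff_sin.pow b
        have h2 : ContDiff ℝ (⊤ : ℕ∞) (fun x => Real.sin x ^ (b+2)) := Real.contDiff_sin.pow (b+2)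
        have e : (fun x => ((b:ℝ)+1) * Real.sin x ^ b - ((b:ℝ)+2) * Real.sin x ^ (b+2))
            = fun x => (((b:ℝ)+1) * Real.sin x ^ b) - (((b:ℝ)+2) * Real.sin x ^ (b+2)) := rfl
        rw [e, itd_sub ((contDiff_const (c := (b:ℝ)+1)).mul h1)
            ((contDiff_const (c := (b:ℝ)+2)).mul h2) j Real.pi,
          itd_const_mul _ h1 j Real.pi, itd_const_mul _ h2 j Real.pi,
          (ih b hjb).1, (ih (b+2) (by omega)).1, if_neg (show ¬ j = b + 2 by omega)]
        by_cases h : j = b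
        · subst h
          rw [if_pos rfl, if_pos rfl, Nat.factorial_succ]
          push_cast
          ring
        · rw [if_neg h, if_neg (by omega)]
          ring

/-- The coefficient `c_k = ∏_{ℓ=1}^{k-1} (2ℓ-1)/(2ℓ)`. -/
noncomputable def cc (k : ℕ) : ℝ :=
  ∏ l ∈ Finset.Icc 1 (k - 1), ((2 * (l : ℝ) - 1) / (2 * l))

private lemma cc_rec (P : ℕ) (hP : 1 ≤ P) :
    2 * (P:ℝ) * cc (P + 1) = (2 * (P:ℝ) - 1) * cc P := by
  obtain ⟨Q, rfl⟩ := Nat.exists_eq_add_of_le hP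
  have h1 : (1 + Q + 1) - 1 = (1 + Q - 1) + 1 := by omega
  rw [cc, h1, Finset.prod_Icc_succ_top (by omega : 1 ≤ (1 + Q - 1) + 1), ← cc]
  have h2 : ((1 + Q - 1) + 1 : ℕ) = 1 + Q := by omega
  rw [h2]
  have hne : (2 : ℝ) * ((1 + Q : ℕ) : ℝ) ≠ 0 := by positivity
  field_simp

private lemma hA (P : ℕ) : deriv (S P) = fun x =>
    1 + ∑ k ∈ Finset.Icc 1 P, cc k * (Real.sin x ^ (2 * k - 2) * Real.cos x) := by
  funext x
  have h : HasDerivAt (S P)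
      (1 + ∑ k ∈ Finset.Icc 1 P, cc k * (Real.sin x ^ (2 * k - 2) * Real.cos x)) x := by
    apply HasDerivAt.add (hasDerivAt_id x)
    apply HasDerivAt.fun_sum
    intro k hk
    have hk1 : 1 ≤ k := (Finset.mem_Icc.mp hk).1
    have h1 : HasDerivAt (fun x => Real.sin x ^ (2 * k - 1))
        ((2 * k - 1 : ℕ) * Real.sin x ^ (2 * k - 1 - 1) * Real.cos x) x :=
      (Real.hasDerivAt_sin x).pow (2 * k - 1)
    have h2 := (h1.const_mul (cc k)).div_const (2 * (k:ℝ) - 1)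
    refine h2.congr_deriv ?_
    have hc : ((2 * k - 1 : ℕ) : ℝ) = 2 * (k:ℝ) - 1 := by
      push_cast [Nat.cast_sub (by omega : 1 ≤ 2 * k)]; ring
    have he : 2 * k - 1 - 1 = 2 * k - 2 := by omega
    have hne : 2 * (k:ℝ) - 1 ≠ 0 := by
      have : (1:ℝ) ≤ (k:ℝ) := by exact_mod_cast hk1
      nlinarith
    rw [he, hc]
    field_simp
  rw [h.deriv]

private lemma sum_id (P : ℕ) (hP : 1 ≤ P) (s c : ℝ) (h : s^2 + c^2 = 1) :
    ∑ k ∈ Finset.Icc 1 P, cc k *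
      (((2*k-2 : ℕ):ℝ) * s ^ (2*k-3) * c * c + s ^ (2*k-2) * (-s))
      = -((2*(P:ℝ)-1) * cc P) * s ^ (2*P-1) := by
  induction P, hP using Nat.le_induction with
  | base => norm_num [cc]
  | succ P hP ih =>
    rw [Finset.sum_Icc_succ_top (by omega : 1 ≤ P+1), ih]
    have e0 : (2*(P+1)-2 : ℕ) = (2*P-1)+1 := by omega
    have e2 : (2*(P+1)-3 : ℕ) = 2*P-1 := by omega
    have e3 : (2*(P+1)-1 : ℕ) = (2*P-1)+2 := by omega
    rw [e0, e2, e3, pow_succ, pow_add]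
    have hrec := cc_rec P hP
    have hc0 : (((2*P-1)+1 : ℕ):ℝ) = 2*(P:ℝ) := by
      push_cast [Nat.cast_sub (by omega : 1 ≤ 2*P)]; ring
    rw [hc0]
    push_cast
    linear_combination 2*(P:ℝ) * cc (P+1) * s^(2*P-1) * h + s^(2*P-1) * hrec

private lemma hB (P : ℕ) (hP : 1 ≤ P) : deriv (deriv (S P)) = fun x =>
    -((2*(P:ℝ)-1) * cc P) * Real.sin x ^ (2*P-1) := by
  rw [hA P]
  funext x
  have h : HasDerivAt (fun x =>
      1 + ∑ k ∈ Finset.Icc 1 P, cc k * (Real.sin x ^ (2 * k - 2) * Real.cos x))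
      (∑ k ∈ Finset.Icc 1 P, cc k *
        (((2*k-2 : ℕ):ℝ) * Real.sin x ^ (2*k-3) * Real.cos x * Real.cos x
          + Real.sin x ^ (2*k-2) * (-Real.sin x))) x := by
    apply HasDerivAt.const_add
    apply HasDerivAt.fun_sum
    intro k hk
    have h1 : HasDerivAt (fun x => Real.sin x ^ (2*k-2))
        ((2*k-2 : ℕ) * Real.sin x ^ (2*k-2-1) * Real.cos x) x :=
      (Real.hasDerivAt_sin x).pow (2*k-2)
    have h2 := (h1.mul (Real.hasDerivAt_cos x)).const_mul (cc k)
    have he : 2*k-2-1 = 2*k-3 := by omega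
    rw [he] at h2
    exact h2
  rw [h.deriv, sum_id P hP (Real.sin x) (Real.cos x) (Real.sin_sq_add_cos_sq x)]

private lemma final (P : ℕ) (hP : 1 ≤ P) :
    (2*(P:ℝ)-1) * cc P * ((2*P-1).factorial : ℝ)
      = (∏ l ∈ Finset.Icc 1 P, (2*(l:ℝ)-1))^2 := by
  induction P, hP using Nat.le_induction with
  | base => norm_num [cc]
  | succ P hP ih =>
    rw [Finset.prod_Icc_succ_top (by omega : 1 ≤ P+1)]
    have e : (2*(P+1)-1 : ℕ) = ((2*P-1)+1)+1 := by omega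
    rw [e, Nat.factorial_succ, Nat.factorial_succ]
    have hc : ((2*P-1 : ℕ):ℝ) = 2*(P:ℝ)-1 := by
      push_cast [Nat.cast_sub (by omega : 1 ≤ 2*P)]; ring
    have hrec := cc_rec P hP
    push_cast [hc]
    linear_combination (2*(P:ℝ)+1)^2 * ((2*P-1 : ℕ).factorial : ℝ) * hrec
      + (2*(P:ℝ)+1)^2 * ih

theorem stmt_5 (P : ℕ) (hP : 0 < P) :
    iteratedDeriv (2 * P + 1) (S P) Real.pi =
      (∏ l ∈ Finset.Icc 1 P, (2 * (l : ℝ) - 1)) ^ 2 := by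
  have hP1 : 1 ≤ P := hP
  have h2 : 2*P+1 = ((2*P-1)+1)+1 := by omega
  rw [h2, iteratedDeriv_succ', iteratedDeriv_succ', hB P hP1,
    itd_const_mul (-((2*(P:ℝ)-1) * cc P)) (Real.contDiff_sin.pow (2*P-1)) (2*P-1) Real.pi,
    (AB (2*P-1) (2*P-1) le_rfl).1, if_pos rfl]
  have hodd : Odd (2*P-1) := ⟨P-1, by omega⟩
  rw [hodd.neg_one_pow]
  linear_combination final P hP1
end

section
/- For every positive natural number P, the (2P-1)-th derivative of the function x ↦ sin(x)^{2P-1} evaluated at x = π equals -(2P-1)!. -/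
open Real Finset

noncomputable def auxF (a m : ℕ) : ℝ → ℝ := fun t => Real.cos t ^ a * Real.sin t ^ m

lemma auxF_contDiff (a m : ℕ) : ContDiff ℝ (⊤ : ℕ∞) (auxF a m) :=
  (Real.contDiff_cos.pow a).mul (Real.contDiff_sin.pow m)

lemma deriv_auxF (a m : ℕ) :
    deriv (auxF a m) =
      fun t => -(a : ℝ) * auxF (a - 1) (m + 1) t + (m : ℝ) * auxF (a + 1) (m - 1) t := by
  funext t
  have hc : HasDerivAt (fun x => Real.cos x ^ a)
      ((a : ℝ) * Real.cos t ^ (a - 1) * (-Real.sin t)) t :=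
    (Real.hasDerivAt_cos t).pow a
  have hs : HasDerivAt (fun x => Real.sin x ^ m)
      ((m : ℝ) * Real.sin t ^ (m - 1) * Real.cos t) t :=
    (Real.hasDerivAt_sin t).pow m
  have h := (hc.mul hs).deriv
  show deriv (fun t => Real.cos t ^ a * Real.sin t ^ m) t = _
  rw [show (fun t => Real.cos t ^ a * Real.sin t ^ m) = ((fun x => Real.cos x ^ a) * fun x => Real.sin x ^ m) from rfl, h]
  simp only [auxF, pow_succ]
  ring

lemma iteratedDeriv_comb (k : ℕ) (c d : ℝ) (f g : ℝ → ℝ)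
    (hf : ContDiff ℝ (⊤ : ℕ∞) f) (hg : ContDiff ℝ (⊤ : ℕ∞) g) (x : ℝ) :
    iteratedDeriv k (fun t => c * f t + d * g t) x =
      c * iteratedDeriv k f x + d * iteratedDeriv k g x := by
  have hf' : ContDiffOn ℝ k f Set.univ := (hf.of_le (mod_cast le_top)).contDiffOn
  have hg' : ContDiffOn ℝ k g Set.univ := (hg.of_le (mod_cast le_top)).contDiffOn
  simp only [← iteratedDerivWithin_univ]
  have hadd := iteratedDerivWithin_add (Set.mem_univ x) uniqueDiffOn_univ
    (f := fun t => c * f t) (g := fun t => d * g t)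
    ((hf'.const_smul c) x (Set.mem_univ x)) ((hg'.const_smul d) x (Set.mem_univ x))
  have : (fun t => c * f t + d * g t)
      = ((fun t => c * f t) + (fun t => d * g t)) := rfl
  rw [this, hadd,
    iteratedDerivWithin_const_mul (Set.mem_univ x) uniqueDiffOn_univ c (hf' x (Set.mem_univ x)),
    iteratedDerivWithin_const_mul (Set.mem_univ x) uniqueDiffOn_univ d (hg' x (Set.mem_univ x))]

lemma auxF_zero : ∀ k a m : ℕ, k < m → iteratedDeriv k (auxF a m) 0 = 0 := by
  intro k
  induction k with
  | zero =>
    intro a m hm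
    simp [auxF, Real.sin_zero, zero_pow (by omega : m ≠ 0)]
  | succ k ih =>
    intro a m hm
    rw [iteratedDeriv_succ', deriv_auxF,
      iteratedDeriv_comb k _ _ _ _ (auxF_contDiff _ _) (auxF_contDiff _ _),
      ih (a - 1) (m + 1) (by omega), ih (a + 1) (m - 1) (by omega)]
    ring

lemma auxF_main : ∀ m a : ℕ, iteratedDeriv m (auxF a m) 0 = Nat.factorial m := by
  intro m
  induction m with
  | zero => simp [auxF]
  | succ m ih =>
    intro a
    rw [iteratedDeriv_succ', deriv_auxF,
      iteratedDeriv_comb m _ _ _ _ (auxF_contDiff _ _) (auxF_contDiff _ _),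
      auxF_zero m (a - 1) (m + 1 + 1) (by omega)]
    simp only [Nat.add_sub_cancel, ih (a + 1), Nat.factorial_succ]
    push_cast
    ring

lemma sin_pow_iteratedDeriv (n : ℕ) :
    iteratedDeriv n (fun t : ℝ => Real.sin t ^ n) 0 = Nat.factorial n := by
  have : (fun t : ℝ => Real.sin t ^ n) = auxF 0 n := by
    funext t; simp [auxF]
  rw [this, auxF_main n 0]

theorem stmt_6 (P : ℕ) (hP : 0 < P) :
    iteratedDeriv (2 * P - 1) (fun x : ℝ => Real.sin x ^ (2 * P - 1)) Real.pi =
      -(Nat.factorial (2 * P - 1) : ℝ) := by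
  set n := 2 * P - 1 with hn
  have hodd : Odd n := ⟨P - 1, by omega⟩
  have hshift := iteratedDeriv_comp_const_add n
    (fun x : ℝ => Real.sin x ^ n) Real.pi
  have h0 : iteratedDeriv n (fun x : ℝ => Real.sin x ^ n) Real.pi
      = iteratedDeriv n (fun z : ℝ => Real.sin (Real.pi + z) ^ n) 0 := by
    have := congrFun hshift 0
    rw [add_zero] at this
    exact this.symm
  rw [h0]
  have heq : (fun z : ℝ => Real.sin (Real.pi + z) ^ n)
      = fun z : ℝ => -(Real.sin z ^ n) := by
    funext z
    rw [show Real.sin (Real.pi + z) = -Real.sin z by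
      rw [Real.sin_add]; simp]
    exact hodd.neg_pow _
  rw [heq, iteratedDeriv_fun_neg, sin_pow_iteratedDeriv]
end

section
/- For every natural number k with 0 ≤ k < 2P-1, the k-th derivative of the function x ↦ sin(x)^{2P-1} vanishes at x = π. -/
open Real Finset

lemma aux_sin_pow (n : ℕ) : ∀ g : ℝ → ℝ, ContDiff ℝ (⊤ : ℕ∞) g → ∀ i < n,
    iteratedDeriv i (fun x : ℝ => Real.sin x ^ n * g x) Real.pi = 0 := by
  induction n with
  | zero => intro g hg i hi; omega
  | succ n ih =>
    intro g hg i hi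
    cases i with
    | zero => simp [iteratedDeriv_zero, Real.sin_pi]
    | succ j =>
      rw [iteratedDeriv_succ']
      have hderiv : deriv (fun x : ℝ => Real.sin x ^ (n + 1) * g x) =
          fun x : ℝ => Real.sin x ^ n *
            (((n : ℝ) + 1) * Real.cos x * g x + Real.sin x * deriv g x) := by
        funext x
        have hgd : DifferentiableAt ℝ g x := (hg.differentiable (by simp)).differentiableAt
        rw [deriv_fun_mul (by fun_prop) hgd]
        rw [deriv_fun_pow (f := Real.sin) (by fun_prop) _]
        rw [Real.deriv_sin]
        push_cast
        ring
      rw [hderiv]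
      have hg' : ContDiff ℝ (⊤ : ℕ∞) (deriv g) := (contDiff_infty_iff_deriv.1 hg).2
      exact ih (fun x => ((n : ℝ) + 1) * Real.cos x * g x + Real.sin x * deriv g x)
        (((contDiff_const.mul Real.contDiff_cos).mul hg).add (Real.contDiff_sin.mul hg')) j (by omega)

theorem stmt_13 (P : ℕ) (hP : 0 < P) (k : ℕ) (hk : k < 2 * P - 1) :
    iteratedDeriv k (fun x : ℝ => Real.sin x ^ (2 * P - 1)) Real.pi = 0 := by
  have := aux_sin_pow (2 * P - 1) (fun _ => 1) contDiff_const k hk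
  simpa using this
end
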